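/- arXiv:2605.12058 — 3 statements merged into one kernel-verified Lean document; each statement's English description precedes it below -/
import Mathlib

section
/- Let r_1, ..., r_n > 0 contain at least two distinct values and W_t(p) = r_t^p / ∑_k r_k^p. Then the Shannon entropy H(p) = −∑_t W_t(p)·log W_t(p) attains its global maximum at p = 0 (where W is uniform with value log n), is strictly decreasing for p > 0, and strictly increasing for p < 0. -/
open Finset

namespace EntropyAux

variable {n : ℕ} (r : Fin n → ℝ)

noncomputable def Sf (p : ℝ) : ℝ := ∑ k, r k ^ p
noncomputable def Tf (p : ℝ) : ℝ := ∑ k, r k ^ p * Real.log (r k)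
noncomputable def Uf (p : ℝ) : ℝ := ∑ k, r k ^ p * Real.log (r k) ^ 2
noncomputable def Hf (p : ℝ) : ℝ := Real.log (Sf r p) - p * (Tf r p / Sf r p)

theorem Sf_pos (hr : ∀ i, 0 < r i) (hn : 0 < n) (p : ℝ) : 0 < Sf r p :=
  Finset.sum_pos (fun k _ => Real.rpow_pos_of_pos (hr k) p)
    (Finset.univ_nonempty_iff.2 (Fin.pos_iff_nonempty.1 hn))

theorem hasDerivAt_Sf (hr : ∀ i, 0 < r i) (p : ℝ) : HasDerivAt (Sf r) (Tf r p) p := by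
  apply HasDerivAt.fun_sum
  intro k _
  exact (Real.hasStrictDerivAt_const_rpow (hr k) p).hasDerivAt

theorem hasDerivAt_Tf (hr : ∀ i, 0 < r i) (p : ℝ) : HasDerivAt (Tf r) (Uf r p) p := by
  apply HasDerivAt.fun_sum
  intro k _
  have := ((Real.hasStrictDerivAt_const_rpow (hr k) p).hasDerivAt).mul_const
      (Real.log (r k))
  exact this.congr_deriv (by ring)

theorem hasDerivAt_Hf (hr : ∀ i, 0 < r i) (hn : 0 < n) (p : ℝ) :
    HasDerivAt (Hf r)
      (-(p * ((Uf r p * Sf r p - Tf r p * Tf r p) / (Sf r p) ^ 2))) p := by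
  have hS := hasDerivAt_Sf r hr p
  have hT := hasDerivAt_Tf r hr p
  have hSne : Sf r p ≠ 0 := (Sf_pos r hr hn p).ne'
  have hlog : HasDerivAt (fun q => Real.log (Sf r q)) (Tf r p / Sf r p) p :=
    hS.log hSne
  have hquot : HasDerivAt (fun q => Tf r q / Sf r q)
      ((Uf r p * Sf r p - Tf r p * Tf r p) / (Sf r p) ^ 2) p := hT.div hS hSne
  have hmul : HasDerivAt (fun q => q * (Tf r q / Sf r q))
      (1 * (Tf r p / Sf r p) +
        p * ((Uf r p * Sf r p - Tf r p * Tf r p) / (Sf r p) ^ 2)) p :=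
    (hasDerivAt_id p).mul hquot
  have := hlog.fun_sub hmul
  exact this.congr_deriv (by ring)

theorem Qf_pos (hr : ∀ i, 0 < r i) (hne : ∃ i j, r i ≠ r j) (p : ℝ) :
    0 < Uf r p * Sf r p - Tf r p * Tf r p := by
  have hn : 0 < n := by
    obtain ⟨i, _, _⟩ := hne
    exact Fin.pos_iff_nonempty.2 ⟨i⟩
  have hSpos := Sf_pos r hr hn p
  set m : ℝ := Tf r p / Sf r p with hm
  have key : Uf r p * Sf r p - Tf r p * Tf r p
      = Sf r p * ∑ k, r k ^ p * (Real.log (r k) - m) ^ 2 := by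
    have expand : ∑ k, r k ^ p * (Real.log (r k) - m) ^ 2
        = Uf r p - 2 * m * Tf r p + m ^ 2 * Sf r p := by
      rw [Uf, Tf, Sf, Finset.mul_sum, Finset.mul_sum,
        ← Finset.sum_sub_distrib, ← Finset.sum_add_distrib]
      apply Finset.sum_congr rfl
      intro k _
      ring
    rw [expand, hm]
    field_simp
    ring
  rw [key]
  apply mul_pos hSpos
  obtain ⟨i, j, hij⟩ := hne
  have hlogne : Real.log (r i) ≠ m ∨ Real.log (r j) ≠ m := by
    by_contra h
    push_neg at h
    exact hij (Real.log_injOn_pos (Set.mem_Ioi.2 (hr i)) (Set.mem_Ioi.2 (hr j))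
      (h.1.trans h.2.symm))
  have hterm : ∀ k : Fin n, 0 ≤ r k ^ p * (Real.log (r k) - m) ^ 2 := fun k =>
    mul_nonneg (Real.rpow_pos_of_pos (hr k) p).le (sq_nonneg _)
  obtain hk | hk := hlogne
  · exact Finset.sum_pos' (fun k _ => hterm k) ⟨i, Finset.mem_univ i,
      mul_pos (Real.rpow_pos_of_pos (hr i) p)
        (by have := sub_ne_zero.2 hk; positivity)⟩
  · exact Finset.sum_pos' (fun k _ => hterm k) ⟨j, Finset.mem_univ j,
      mul_pos (Real.rpow_pos_of_pos (hr j) p)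
        (by have := sub_ne_zero.2 hk; positivity)⟩

end EntropyAux

open EntropyAux in
/-- the Shannon entropy of the weight distribution attains its global
maximum log n at p = 0, is strictly decreasing for p > 0 and strictly increasing
for p < 0. -/
theorem entropy_max_at_zero
    (n : ℕ) (r : Fin n → ℝ) (hr : ∀ i, 0 < r i) (hne : ∃ i j, r i ≠ r j) :
    let H : ℝ → ℝ :=
      fun p => -∑ t, (r t ^ p / ∑ k, r k ^ p) * Real.log (r t ^ p / ∑ k, r k ^ p)
    H 0 = Real.log n ∧ (∀ p ≠ 0, H p < Real.log n) ∧
      StrictAntiOn H (Set.Ici 0) ∧ StrictMonoOn H (Set.Iic 0) := by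
  intro H
  have hn : 0 < n := by
    obtain ⟨i, _, _⟩ := hne
    exact Fin.pos_iff_nonempty.2 ⟨i⟩
  have hSpos : ∀ p, 0 < Sf r p := Sf_pos r hr hn
  -- H coincides with Hf
  have hHeq : H = Hf r := by
    funext p
    have hSne : Sf r p ≠ 0 := (hSpos p).ne'
    show -∑ t, (r t ^ p / ∑ k, r k ^ p) * Real.log (r t ^ p / ∑ k, r k ^ p)
        = Hf r p
    have step : ∀ t : Fin n, (r t ^ p / Sf r p) * Real.log (r t ^ p / Sf r p)
        = p * (r t ^ p * Real.log (r t)) / Sf r p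
          - Real.log (Sf r p) * (r t ^ p / Sf r p) := by
      intro t
      rw [Real.log_div (Real.rpow_pos_of_pos (hr t) p).ne' hSne,
        Real.log_rpow (hr t)]
      ring
    have hsum : ∑ t, (r t ^ p / Sf r p) * Real.log (r t ^ p / Sf r p)
        = p * (Tf r p / Sf r p) - Real.log (Sf r p) := by
      rw [Finset.sum_congr rfl fun t _ => step t, Finset.sum_sub_distrib]
      have h1 : ∑ t, p * (r t ^ p * Real.log (r t)) / Sf r p
          = p * (Tf r p / Sf r p) := by
        rw [Tf, Finset.sum_div, Finset.mul_sum]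
        exact Finset.sum_congr rfl fun t _ => by ring
      have h2 : ∑ t : Fin n, Real.log (Sf r p) * (r t ^ p / Sf r p)
          = Real.log (Sf r p) := by
        rw [← Finset.mul_sum, ← Finset.sum_div, ← Sf, div_self hSne, mul_one]
      rw [h1, h2]
    show -∑ t, (r t ^ p / Sf r p) * Real.log (r t ^ p / Sf r p) = Hf r p
    rw [hsum, Hf]
    ring
  have hderiv : ∀ p : ℝ, deriv H p
      = -(p * ((Uf r p * Sf r p - Tf r p * Tf r p) / (Sf r p) ^ 2)) := by
    intro p
    rw [hHeq]
    exact (hasDerivAt_Hf r hr hn p).deriv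
  have hcont : ContinuousOn H Set.univ := by
    rw [hHeq]
    exact fun p _ => ((hasDerivAt_Hf r hr hn p).differentiableAt.continuousAt).continuousWithinAt
  have hQpos := Qf_pos r hr hne
  have hQdivpos : ∀ p, 0 < (Uf r p * Sf r p - Tf r p * Tf r p) / (Sf r p) ^ 2 :=
    fun p => div_pos (hQpos p) (pow_pos (hSpos p) 2)
  have hanti : StrictAntiOn H (Set.Ici 0) := by
    apply strictAntiOn_of_deriv_neg (convex_Ici 0) (hcont.mono (Set.subset_univ _))
    intro x hx
    rw [interior_Ici] at hx
    rw [hderiv x]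
    have := hQdivpos x
    nlinarith [Set.mem_Ioi.1 hx]
  have hmono : StrictMonoOn H (Set.Iic 0) := by
    apply strictMonoOn_of_deriv_pos (convex_Iic 0) (hcont.mono (Set.subset_univ _))
    intro x hx
    rw [interior_Iic] at hx
    rw [hderiv x]
    have := hQdivpos x
    nlinarith [Set.mem_Iio.1 hx]
  have hH0 : H 0 = Real.log n := by
    rw [hHeq, Hf]
    have : Sf r 0 = (n : ℝ) := by
      rw [Sf]
      simp [Real.rpow_zero]
    rw [this]
    ring
  refine ⟨hH0, ?_, hanti, hmono⟩
  intro p hp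
  rcases lt_or_gt_of_ne hp with h | h
  · rw [← hH0]
    exact hmono (Set.mem_Iic.2 h.le) (Set.mem_Iic.2 le_rfl) h
  · rw [← hH0]
    exact hanti (Set.mem_Ici.2 le_rfl) (Set.mem_Ici.2 h.le) h
end

section
/- Let r_1, ..., r_n > 0 with a unique maximizer t*, and fix an index t ∉ {t*} with log r_t strictly greater than μ(p₀) for some p₀ (where μ(p) = ∑_k W_k(p)·log r_k and W_k(p) = r_k^p/∑_j r_j^p). Then there exists a unique p_t > p₀ with μ(p_t) = log r_t, the weight W_t(p) attains its maximum over [p₀, ∞) at p_t, and W_t(p) is strictly decreasing for p > p_t with W_t(p) → 0 as p → ∞. -/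
open Filter Topology

/-- for a non-maximal token t with μ(p₀) < log r_t < log r_{t*},
there is a unique critical p_t > p₀ with μ(p_t) = log r_t, at which W_t attains
its maximum over [p₀, ∞); W_t is strictly decreasing beyond p_t and tends to 0. -/
theorem suboptimal_weight_peak_and_decay
    (n : ℕ) (hn : 2 ≤ n) (r : Fin n → ℝ) (hr : ∀ i, 0 < r i)
    (tstar : Fin n) (hmax : ∀ k, k ≠ tstar → r k < r tstar)
    (t : Fin n) (ht : t ≠ tstar) (p₀ : ℝ)
    (W : Fin n → ℝ → ℝ) (hW : W = fun s p => r s ^ p / ∑ j, r j ^ p)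
    (μ : ℝ → ℝ) (hμ : μ = fun p => ∑ k, (r k ^ p / ∑ j, r j ^ p) * Real.log (r k))
    (h₀ : μ p₀ < Real.log (r t)) (h₁ : Real.log (r t) < Real.log (r tstar)) :
    ∃ pt : ℝ, p₀ < pt ∧ μ pt = Real.log (r t) ∧
      (∀ q, p₀ < q → μ q = Real.log (r t) → q = pt) ∧
      (∀ p ∈ Set.Ici p₀, W t p ≤ W t pt) ∧
      StrictAntiOn (W t) (Set.Ici pt) ∧
      Tendsto (W t) atTop (𝓝 0) := by
  set x : Fin n → ℝ := fun j => r j / r t with hxdef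
  have hx : ∀ j, 0 < x j := fun j => div_pos (hr j) (hr t)
  have hxstar : 1 < x tstar := by
    rw [hxdef]
    rw [lt_div_iff₀ (hr t), one_mul]
    exact (Real.log_lt_log_iff (hr t) (hr tstar)).mp h₁
  set g : ℝ → ℝ := fun p => ∑ j, x j ^ p with hgdef
  set g' : ℝ → ℝ := fun p => ∑ j, x j ^ p * Real.log (x j) with hg'def
  -- derivative
  have hgd : ∀ p, HasDerivAt g (g' p) p := by
    intro p
    exact HasDerivAt.fun_sum fun j _ => (Real.hasStrictDerivAt_const_rpow (hx j) p).hasDerivAt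
  have hgc : Continuous g :=
    continuous_iff_continuousAt.mpr fun p => (hgd p).continuousAt
  have hg'c : Continuous g' :=
    continuous_finset_sum _ fun j _ =>
      ((continuous_iff_continuousAt.mpr fun b =>
        Real.continuousAt_const_rpow (hx j).ne') |>.mul continuous_const)
  -- per-term monotonicity
  have hterm : ∀ j, ∀ p q : ℝ, p ≤ q → x j ^ p * Real.log (x j) ≤ x j ^ q * Real.log (x j) := by
    intro j p q hpq
    rcases eq_or_lt_of_le hpq with rfl | hpq
    · exact le_rfl
    rcases lt_trichotomy (x j) 1 with h | h | h
    · have hlog : Real.log (x j) < 0 := Real.log_neg (hx j) h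
      have := Real.rpow_lt_rpow_of_exponent_gt (hx j) h hpq
      exact mul_le_mul_of_nonpos_right this.le hlog.le
    · simp [h]
    · have hlog : 0 < Real.log (x j) := Real.log_pos h
      have := Real.rpow_lt_rpow_of_exponent_lt h hpq
      exact mul_le_mul_of_nonneg_right this.le hlog.le
  have hg'mono : StrictMono g' := by
    intro p q hpq
    apply Finset.sum_lt_sum (fun j _ => hterm j p q hpq.le)
    refine ⟨tstar, Finset.mem_univ _, ?_⟩
    have hlog : 0 < Real.log (x tstar) := Real.log_pos hxstar
    exact mul_lt_mul_of_pos_right (Real.rpow_lt_rpow_of_exponent_lt hxstar hpq) hlog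
  -- positivity of sums
  have hSpos : ∀ p : ℝ, 0 < ∑ j, r j ^ p := fun p =>
    Finset.sum_pos (fun j _ => Real.rpow_pos_of_pos (hr j) p) ⟨t, Finset.mem_univ t⟩
  have hgpos : ∀ p : ℝ, 0 < g p := fun p =>
    Finset.sum_pos (fun j _ => Real.rpow_pos_of_pos (hx j) p) ⟨t, Finset.mem_univ t⟩
  -- the key identity
  have hident : ∀ p : ℝ, μ p - Real.log (r t) = (r t ^ p / ∑ j, r j ^ p) * g' p := by
    intro p
    have hxp : ∀ j, x j ^ p = r j ^ p / r t ^ p := fun j =>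
      Real.div_rpow (hr j).le (hr t).le p
    have hxl : ∀ j, Real.log (x j) = Real.log (r j) - Real.log (r t) := fun j =>
      Real.log_div (hr j).ne' (hr t).ne'
    have hrt : (r t : ℝ) ^ p ≠ 0 := (Real.rpow_pos_of_pos (hr t) p).ne'
    have hS : (∑ j, r j ^ p) ≠ 0 := (hSpos p).ne'
    rw [hg'def, hμ]
    rw [Finset.mul_sum]
    have : ∀ j, (r t ^ p / ∑ j, r j ^ p) * (x j ^ p * Real.log (x j))
        = (r j ^ p / ∑ j, r j ^ p) * Real.log (r j)
          - (r j ^ p / ∑ j, r j ^ p) * Real.log (r t) := by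
      intro j
      rw [hxp j, hxl j]
      field_simp
    simp_rw [this]
    rw [Finset.sum_sub_distrib, ← Finset.sum_mul, ← Finset.sum_div, div_self hS, one_mul]
  -- g' p₀ < 0
  have hg'p₀ : g' p₀ < 0 := by
    by_contra h
    push_neg at h
    have := hident p₀
    nlinarith [mul_nonneg (div_pos (Real.rpow_pos_of_pos (hr t) p₀) (hSpos p₀)).le h]
  -- find p1 > p₀ with g' p1 > 0
  have htendsto : Tendsto (fun p : ℝ => x tstar ^ p * Real.log (x tstar)) atTop atTop := by
    have hlog : 0 < Real.log (x tstar) := Real.log_pos hxstar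
    have h1 : Tendsto (fun p : ℝ => x tstar ^ p) atTop atTop := by
      have : (fun p : ℝ => x tstar ^ p) = fun p => Real.exp (p * Real.log (x tstar)) := by
        funext p; rw [Real.rpow_def_of_pos (hx tstar)]; ring_nf
      rw [this]
      exact Real.tendsto_exp_atTop.comp (Tendsto.atTop_mul_const hlog tendsto_id)
    exact Tendsto.atTop_mul_const hlog h1
  obtain ⟨p1, hp1gt, hp1ge⟩ :
      ∃ p1, (0 : ℝ) < x tstar ^ p1 * Real.log (x tstar)
          + ∑ j ∈ Finset.univ.erase tstar, x j ^ p₀ * Real.log (x j) ∧ p₀ ≤ p1 := by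
    have := (tendsto_atTop_add_const_right atTop
      (∑ j ∈ Finset.univ.erase tstar, x j ^ p₀ * Real.log (x j)) htendsto)
    exact ((this.eventually_gt_atTop 0).and (eventually_ge_atTop p₀)).exists
  have hg'p1 : 0 < g' p1 := by
    have hsplit : g' p1 = x tstar ^ p1 * Real.log (x tstar)
        + ∑ j ∈ Finset.univ.erase tstar, x j ^ p1 * Real.log (x j) := by
      rw [hg'def]
      exact (Finset.add_sum_erase _ _ (Finset.mem_univ tstar)).symm
    have hle : ∑ j ∈ Finset.univ.erase tstar, x j ^ p₀ * Real.log (x j)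
        ≤ ∑ j ∈ Finset.univ.erase tstar, x j ^ p1 * Real.log (x j) :=
      Finset.sum_le_sum fun j _ => hterm j p₀ p1 hp1ge
    linarith [hp1gt]
  -- IVT
  obtain ⟨pt, hptmem, hpt0⟩ : ∃ pt ∈ Set.Icc p₀ p1, g' pt = 0 := by
    have h01 : p₀ ≤ p1 := hp1ge
    have := intermediate_value_Icc h01 hg'c.continuousOn
    have h0mem : (0 : ℝ) ∈ Set.Icc (g' p₀) (g' p1) := ⟨hg'p₀.le, hg'p1.le⟩
    obtain ⟨pt, hmem, h⟩ := this h0mem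
    exact ⟨pt, hmem, h⟩
  have hptgt : p₀ < pt := by
    rcases lt_or_ge p₀ pt with h | h
    · exact h
    · exfalso
      have : g' pt ≤ g' p₀ := hg'mono.monotone h
      linarith
  -- μ pt = log r t
  have hμpt : μ pt = Real.log (r t) := by
    have := hident pt
    rw [hpt0, mul_zero] at this
    linarith
  -- W = 1/g
  have hWg : ∀ p : ℝ, W t p = (g p)⁻¹ := by
    intro p
    rw [hW, hgdef]
    simp only
    have : ∑ j, x j ^ p = (∑ j, r j ^ p) / r t ^ p := by
      rw [Finset.sum_div]
      congr 1
      funext j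
      exact Real.div_rpow (hr j).le (hr t).le p
    rw [this, inv_div]
  -- monotonicity of g
  have hderiv : ∀ p, deriv g p = g' p := fun p => (hgd p).deriv
  have hgmono : StrictMonoOn g (Set.Ici pt) := by
    apply strictMonoOn_of_deriv_pos (convex_Ici pt) hgc.continuousOn
    intro p hp
    rw [interior_Ici] at hp
    rw [hderiv]
    have := hg'mono hp
    rw [hpt0] at this
    exact this
  have hganti : AntitoneOn g (Set.Icc p₀ pt) := by
    apply antitoneOn_of_deriv_nonpos (convex_Icc p₀ pt) hgc.continuousOn
    · exact fun p _ => ((hgd p).differentiableAt).differentiableWithinAt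
    · intro p hp
      rw [interior_Icc] at hp
      rw [hderiv]
      have := hg'mono hp.2
      rw [hpt0] at this
      exact this.le
  refine ⟨pt, hptgt, hμpt, ?_, ?_, ?_⟩
  · -- uniqueness
    intro q _ hq
    have := hident q
    rw [hq, sub_self] at this
    have hpos : 0 < r t ^ q / ∑ j, r j ^ q :=
      div_pos (Real.rpow_pos_of_pos (hr t) q) (hSpos q)
    have hq0 : g' q = 0 := by
      rcases mul_eq_zero.mp this.symm with h | h
      · exact absurd h hpos.ne'
      · exact h
    exact hg'mono.injective (hq0.trans hpt0.symm)
  · -- max over Ici p₀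
    intro p hp
    rw [hWg, hWg]
    have hle : g pt ≤ g p := by
      rcases le_total p pt with h | h
      · exact hganti ⟨hp, h⟩ ⟨hptgt.le, le_refl pt⟩ h
      · exact (hgmono.monotoneOn) (Set.self_mem_Ici) h h
    exact inv_anti₀ (hgpos pt) hle
  · constructor
    · -- strict anti
      intro a ha b hb hab
      rw [hWg, hWg]
      exact inv_strictAnti₀ (hgpos a) (hgmono ha hb hab)
    · -- tendsto 0
      have h1 : Tendsto (fun p : ℝ => x tstar ^ p) atTop atTop := by
        have heq : (fun p : ℝ => x tstar ^ p) = fun p => Real.exp (p * Real.log (x tstar)) := by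
          funext p; rw [Real.rpow_def_of_pos (hx tstar)]; ring_nf
        rw [heq]
        exact Real.tendsto_exp_atTop.comp
          (Tendsto.atTop_mul_const (Real.log_pos hxstar) tendsto_id)
      have hgtop : Tendsto g atTop atTop :=
        tendsto_atTop_mono (fun p => Finset.single_le_sum (f := fun j => x j ^ p)
          (fun j _ => (Real.rpow_pos_of_pos (hx j) p).le) (Finset.mem_univ tstar)) h1
      have := hgtop.inv_tendsto_atTop
      refine this.congr fun p => (hWg p).symm
end

section
/- Let R > 1 and let S : ℝ → ℝ satisfy c₁·(n−1) ≤ S(p) ≤ c₂·(n−1) for constants 0 < c₁ ≤ c₂ on [p_low, p_high]. Define W(p) = R^p / (R^p + S(p)). If R^{p_high} ≤ n − 1, then for any p_stat ∈ [p_low, p_high], W(p_high)/W(p_stat) ≥ C·R^{p_high − p_stat} where C = c₁/(1 + c₂) > 0. -/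
/-- under the pre-saturation condition R^{p_high} ≤ n − 1 and
background mass bounds c₁(n−1) ≤ S(p) ≤ c₂(n−1), the weight ratio satisfies
W(p_high)/W(p_stat) ≥ (c₁/(1+c₂))·R^{p_high − p_stat}. -/
theorem presaturation_amplification
    (n : ℕ) (hn : 2 ≤ n) (R c₁ c₂ plow phigh pstat : ℝ)
    (hR : 1 < R) (hc₁ : 0 < c₁) (hc₁₂ : c₁ ≤ c₂)
    (S : ℝ → ℝ)
    (hS : ∀ p ∈ Set.Icc plow phigh,
      c₁ * ((n : ℝ) - 1) ≤ S p ∧ S p ≤ c₂ * ((n : ℝ) - 1))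
    (hpre : R ^ phigh ≤ (n : ℝ) - 1)
    (hstat : pstat ∈ Set.Icc plow phigh) (hph : phigh ∈ Set.Icc plow phigh) :
    let W : ℝ → ℝ := fun p => R ^ p / (R ^ p + S p)
    (c₁ / (1 + c₂)) * R ^ (phigh - pstat) ≤ W phigh / W pstat := by
  intro W
  have hR0 : (0:ℝ) < R := lt_trans one_pos hR
  have ha : (0:ℝ) < R ^ pstat := Real.rpow_pos_of_pos hR0 pstat
  have hb : (0:ℝ) < R ^ phigh := Real.rpow_pos_of_pos hR0 phigh
  have hn1 : (1:ℝ) ≤ (n:ℝ) - 1 := by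
    have : (2:ℝ) ≤ (n:ℝ) := by exact_mod_cast hn
    linarith
  obtain ⟨hSs1, hSs2⟩ := hS pstat hstat
  obtain ⟨hSh1, hSh2⟩ := hS phigh hph
  have hSs0 : 0 < S pstat := lt_of_lt_of_le (by nlinarith) hSs1
  have hSh0 : 0 < S phigh := lt_of_lt_of_le (by nlinarith) hSh1
  have hc2 : (0:ℝ) < 1 + c₂ := by linarith
  have hdh : 0 < R ^ phigh + S phigh := by linarith
  have hds : 0 < R ^ pstat + S pstat := by linarith
  have hW : W phigh / W pstat
      = R ^ (phigh - pstat) * ((R ^ pstat + S pstat) / (R ^ phigh + S phigh)) := by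
    simp only [W]
    rw [Real.rpow_sub hR0]
    field_simp
  rw [hW]
  have hkey : c₁ / (1 + c₂) ≤ (R ^ pstat + S pstat) / (R ^ phigh + S phigh) := by
    rw [div_le_div_iff₀ hc2 hdh]
    have h1 : c₁ * (R ^ phigh + S phigh) ≤ c₁ * ((1 + c₂) * ((n:ℝ) - 1)) := by
      apply mul_le_mul_of_nonneg_left _ hc₁.le
      nlinarith
    have h2 : c₁ * ((n:ℝ) - 1) ≤ R ^ pstat + S pstat := by linarith
    calc c₁ * (R ^ phigh + S phigh) ≤ c₁ * ((1 + c₂) * ((n:ℝ) - 1)) := h1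
      _ = (c₁ * ((n:ℝ) - 1)) * (1 + c₂) := by ring
      _ ≤ (R ^ pstat + S pstat) * (1 + c₂) := by nlinarith
  have hrp : (0:ℝ) < R ^ (phigh - pstat) := Real.rpow_pos_of_pos hR0 _
  calc c₁ / (1 + c₂) * R ^ (phigh - pstat)
      = R ^ (phigh - pstat) * (c₁ / (1 + c₂)) := by ring
    _ ≤ R ^ (phigh - pstat) * ((R ^ pstat + S pstat) / (R ^ phigh + S phigh)) :=
        mul_le_mul_of_nonneg_left hkey hrp.le
end
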